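/- Let (R_γ(t))_{t>0} ⊆ L(X) be strongly continuous with ‖R_γ(t)‖ ≤ M₁ t^{γβ−1} for t ∈ (0,1] and ‖R_γ(t)‖ ≤ M₂ t^{−γ−1} for t ≥ 1, where γ ∈ (0,1), β ∈ (0,1]. Let L ≥ 0 and for f, with ‖f(t,x) − f(t,y)‖ ≤ L‖x − y‖ for all t ≥ 0 and x,y ∈ X, define Υx(t) = S_γ(t)x₀ + ∫_0^t R_γ(t−s) f(s, x(s)) ds on the Banach space C_b([0,∞):X). If L·(M₁/(γβ) + M₂/γ) < 1, then Υ is a strict contraction on C_b([0,∞):X) and hence has a unique fixed point. -/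

import Mathlib

open MeasureTheory intervalIntegral

variable {X : Type*} [NormedAddCommGroup X] [NormedSpace ℝ X] [CompleteSpace X]

/-- The solution operator `Υx(t) = S_γ(t)x₀ + ∫_0^t R_γ(t-s) f(s, x(s)) ds`. -/
noncomputable def Upsilon (S R : ℝ → X →L[ℝ] X) (f : ℝ → X → X) (x₀ : X)
    (x : ℝ → X) (t : ℝ) : X :=
  S t x₀ + ∫ s in (0:ℝ)..t, R (t - s) (f s (x s))

/-- A bounded continuous function `[0,∞) → X` (element of `C_b([0,∞):X)`). -/
def BddCont (u : ℝ → X) : Prop :=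
  Continuous u ∧ ∃ C : ℝ, ∀ t : ℝ, ‖u t‖ ≤ C

/-!
The kernel bounds give `‖R τ‖ ≤ ψ τ` for the piecewise power function `ψ`, equal to
`M₁ τ^{γβ-1}` on `(0,1]` and `M₂ τ^{-γ-1}` beyond, whose integral over `(0,∞)` is
`M₁/(γβ) + M₂/γ`. Hence `‖Υu(t) - Υv(t)‖ ≤ L (M₁/(γβ) + M₂/γ) sup_{s ≥ 0} ‖u s - v s‖`, and the
Banach fixed point theorem applies on `ℝ →ᵇ X`, into which a function on `[0,∞)` embeds by
precomposition with `t ↦ max t 0`. The integrand `s ↦ R(t-s) f(s, u s)` is measurable because a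
strongly continuous family of operators on a Banach space is locally bounded (Banach–Steinhaus),
hence jointly continuous.
-/

open Set Filter Topology
open scoped BoundedContinuousFunction

section StronglyContinuous

variable {α 𝕜 E F : Type*} [TopologicalSpace α] [NontriviallyNormedField 𝕜]
  [NormedAddCommGroup E] [NormedSpace 𝕜 E] [NormedAddCommGroup F] [NormedSpace 𝕜 F]
  {R : α → E →L[𝕜] F} {s : Set α}

theorem ContinuousWithinAt.clm_apply_of_eventually_norm_le {w : α → E} {a : α} {C : ℝ}
    (hR : ContinuousWithinAt (fun t => R t (w a)) s a) (hw : ContinuousWithinAt w s a)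
    (hC : ∀ᶠ t in 𝓝[s] a, ‖R t‖ ≤ C) :
    ContinuousWithinAt (fun t => R t (w t)) s a := by
  have hsmall : Tendsto (fun t => R t (w t - w a)) (𝓝[s] a) (𝓝 0) := by
    refine squeeze_zero_norm' (a := fun t => C * ‖w t - w a‖) ?_ ?_
    · filter_upwards [hC] with t ht
      exact (R t).le_of_opNorm_le ht _
    · simpa using ((hw.tendsto.sub_const (w a)).norm.const_mul C)
  simpa [map_sub, ContinuousWithinAt] using hsmall.add hR

theorem exists_eventually_norm_le_of_continuousOn_apply [LocallyCompactSpace α] [CompleteSpace E]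
    (hs : IsOpen s) (hR : ∀ x, ContinuousOn (fun t => R t x) s) {a : α} (ha : a ∈ s) :
    ∃ C, ∀ᶠ t in 𝓝 a, ‖R t‖ ≤ C := by
  obtain ⟨K, hKa, hKs, hK⟩ := local_compact_nhds (hs.mem_nhds ha)
  obtain ⟨C, hC⟩ := banach_steinhaus (g := fun t : K => R t) fun x => by
    obtain ⟨C, hC⟩ := hK.exists_bound_of_continuousOn ((hR x).mono hKs)
    exact ⟨C, fun t => hC t t.2⟩
  exact ⟨C, Filter.mem_of_superset hKa fun t ht => hC ⟨t, ht⟩⟩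

theorem ContinuousOn.clm_apply_of_continuousOn_apply [LocallyCompactSpace α] [CompleteSpace E]
    (hs : IsOpen s) (hR : ∀ x, ContinuousOn (fun t => R t x) s) {w : α → E}
    (hw : ContinuousOn w s) : ContinuousOn (fun t => R t (w t)) s := fun a ha => by
  obtain ⟨C, hC⟩ := exists_eventually_norm_le_of_continuousOn_apply hs hR ha
  exact (hR (w a) a ha).clm_apply_of_eventually_norm_le (hw a ha) (nhdsWithin_le_nhds hC)

end StronglyContinuous

section Convolution

variable {E F : Type*} [NormedAddCommGroup E] [NormedSpace ℝ E] [NormedAddCommGroup F]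
  [NormedSpace ℝ F] {R : ℝ → E →L[ℝ] F} {ψ : ℝ → ℝ} {g : ℝ → E} {t : ℝ}

theorem intervalIntegrable_clm_apply_sub [CompleteSpace E] (ht : 0 ≤ t)
    (hR : ∀ x, ContinuousOn (fun τ => R τ x) (Ioi 0)) (hRψ : ∀ τ > 0, ‖R τ‖ ≤ ψ τ)
    (hψ : IntervalIntegrable ψ volume 0 t) (hg : Continuous g) :
    IntervalIntegrable (fun s => R (t - s) (g s)) volume 0 t := by
  obtain ⟨C, hC⟩ := (isCompact_Icc (a := 0) (b := t)).exists_bound_of_continuousOn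
    hg.continuousOn
  have hσ : IntervalIntegrable (fun σ => R σ (g (t - σ))) volume 0 t := by
    refine (hψ.mul_const C).mono_fun' ?_ ?_ <;> rw [uIoc_of_le ht]
    · refine ContinuousOn.aestronglyMeasurable ?_ measurableSet_Ioc
      exact (ContinuousOn.clm_apply_of_continuousOn_apply isOpen_Ioi hR
        (hg.comp (continuous_sub_left t)).continuousOn).mono fun σ hσ => hσ.1
    · filter_upwards [ae_restrict_mem measurableSet_Ioc] with σ ⟨hσ0, hσt⟩
      calc ‖R σ (g (t - σ))‖ ≤ ‖R σ‖ * ‖g (t - σ)‖ := (R σ).le_opNorm _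
        _ ≤ ψ σ * C := mul_le_mul (hRψ σ hσ0) (hC _ ⟨by linarith, by linarith⟩)
            (norm_nonneg _) ((norm_nonneg _).trans (hRψ σ hσ0))
  simpa using (hσ.comp_sub_left t).symm

theorem norm_integral_clm_apply_sub_le (ht : 0 ≤ t) (hRψ : ∀ τ > 0, ‖R τ‖ ≤ ψ τ)
    (hψ : IntervalIntegrable ψ volume 0 t) {K : ℝ} (hg : ∀ s ∈ Icc 0 t, ‖g s‖ ≤ K) :
    ‖∫ s in 0..t, R (t - s) (g s)‖ ≤ (∫ σ in 0..t, ψ σ) * K := by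
  have hsub : ∫ s in 0..t, R (t - s) (g s) = ∫ σ in 0..t, R σ (g (t - σ)) := by
    simpa using integral_comp_sub_left (a := 0) (b := t) (fun σ => R σ (g (t - σ))) t
  rw [hsub, ← intervalIntegral.integral_mul_const]
  refine norm_integral_le_of_norm_le ht (Eventually.of_forall fun σ ⟨hσ0, hσt⟩ => ?_)
    (hψ.mul_const K)
  calc ‖R σ (g (t - σ))‖ ≤ ‖R σ‖ * ‖g (t - σ)‖ := (R σ).le_opNorm _
    _ ≤ ψ σ * K := mul_le_mul (hRψ σ hσ0) (hg _ ⟨by linarith, by linarith⟩)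
        (norm_nonneg _) ((norm_nonneg _).trans (hRψ σ hσ0))

end Convolution

section KernelMajorant

noncomputable def kernelMajorant (M₁ M₂ a b σ : ℝ) : ℝ :=
  if σ ≤ 1 then M₁ * σ ^ (a - 1) else M₂ * σ ^ (-b - 1)

variable {M₁ M₂ a b : ℝ}

theorem le_kernelMajorant {φ : ℝ → ℝ} (h₁ : ∀ σ ∈ Ioc 0 1, φ σ ≤ M₁ * σ ^ (a - 1))
    (h₂ : ∀ σ ≥ 1, φ σ ≤ M₂ * σ ^ (-b - 1)) (σ : ℝ) (hσ : 0 < σ) :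
    φ σ ≤ kernelMajorant M₁ M₂ a b σ := by
  unfold kernelMajorant
  split_ifs with h
  exacts [h₁ σ ⟨hσ, h⟩, h₂ σ (le_of_not_ge h)]

theorem kernelMajorant_nonneg (hM₁ : 0 ≤ M₁) (hM₂ : 0 ≤ M₂) {σ : ℝ} (hσ : 0 ≤ σ) :
    0 ≤ kernelMajorant M₁ M₂ a b σ := by
  unfold kernelMajorant
  split_ifs <;> positivity

theorem eqOn_kernelMajorant_Ioc :
    EqOn (kernelMajorant M₁ M₂ a b) (fun σ => M₁ * σ ^ (a - 1)) (Ioc 0 1) :=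
  fun _ hσ => if_pos hσ.2

theorem eqOn_kernelMajorant_Ioi :
    EqOn (kernelMajorant M₁ M₂ a b) (fun σ => M₂ * σ ^ (-b - 1)) (Ioi 1) :=
  fun _ hσ => if_neg (not_le.2 hσ)

theorem integrableOn_kernelMajorant (ha : 0 < a) (hb : 0 < b) :
    IntegrableOn (kernelMajorant M₁ M₂ a b) (Ioi 0) := by
  rw [← Ioc_union_Ioi_eq_Ioi zero_le_one]
  refine IntegrableOn.union ?_ ?_
  · refine IntegrableOn.congr_fun ?_ eqOn_kernelMajorant_Ioc.symm measurableSet_Ioc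
    rw [← intervalIntegrable_iff_integrableOn_Ioc_of_le zero_le_one]
    exact (intervalIntegrable_rpow' (by linarith)).const_mul M₁
  · refine IntegrableOn.congr_fun ?_ eqOn_kernelMajorant_Ioi.symm measurableSet_Ioi
    exact (integrableOn_Ioi_rpow_of_lt (by linarith) one_pos).const_mul M₂

theorem integral_kernelMajorant (ha : 0 < a) (hb : 0 < b) :
    ∫ σ in Ioi 0, kernelMajorant M₁ M₂ a b σ = M₁ / a + M₂ / b := by
  have hint := integrableOn_kernelMajorant (M₁ := M₁) (M₂ := M₂) ha hb
  rw [← Ioc_union_Ioi_eq_Ioi zero_le_one,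
    setIntegral_union Ioc_disjoint_Ioi_same measurableSet_Ioi (hint.mono_set Ioc_subset_Ioi_self)
      (hint.mono_set (Ioi_subset_Ioi zero_le_one)),
    setIntegral_congr_fun measurableSet_Ioc eqOn_kernelMajorant_Ioc,
    setIntegral_congr_fun measurableSet_Ioi eqOn_kernelMajorant_Ioi,
    MeasureTheory.integral_const_mul, MeasureTheory.integral_const_mul,
    ← intervalIntegral.integral_of_le zero_le_one, integral_rpow (Or.inl (by linarith)),
    integral_Ioi_rpow_of_lt (by linarith) one_pos, sub_add_cancel, show -b - 1 + 1 = -b by ring,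
    Real.one_rpow, Real.one_rpow, Real.zero_rpow ha.ne']
  ring

theorem intervalIntegrable_kernelMajorant (ha : 0 < a) (hb : 0 < b) {t : ℝ} (ht : 0 ≤ t) :
    IntervalIntegrable (kernelMajorant M₁ M₂ a b) volume 0 t :=
  (intervalIntegrable_iff_integrableOn_Ioc_of_le ht).2
    ((integrableOn_kernelMajorant ha hb).mono_set Ioc_subset_Ioi_self)

theorem integral_kernelMajorant_le (hM₁ : 0 ≤ M₁) (hM₂ : 0 ≤ M₂) (ha : 0 < a) (hb : 0 < b)
    {t : ℝ} (ht : 0 ≤ t) : ∫ σ in 0..t, kernelMajorant M₁ M₂ a b σ ≤ M₁ / a + M₂ / b := by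
  rw [← integral_kernelMajorant ha hb, intervalIntegral.integral_of_le ht]
  refine setIntegral_mono_set (integrableOn_kernelMajorant ha hb) ?_
    (Eventually.of_forall Ioc_subset_Ioi_self)
  filter_upwards [ae_restrict_mem measurableSet_Ioi] with σ hσ
  exact kernelMajorant_nonneg hM₁ hM₂ (le_of_lt hσ)

end KernelMajorant

theorem norm_Upsilon_sub_le {S R : ℝ → X →L[ℝ] X} {f : ℝ → X → X} {x₀ : X} {ψ : ℝ → ℝ}
    {L K t : ℝ} (hR : ∀ x, ContinuousOn (fun τ => R τ x) (Ioi 0))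
    (hRψ : ∀ τ > 0, ‖R τ‖ ≤ ψ τ) (hψ : IntervalIntegrable ψ volume 0 t)
    (hf : Continuous (Function.uncurry f))
    (hfLip : ∀ s ≥ (0:ℝ), ∀ x y, ‖f s x - f s y‖ ≤ L * ‖x - y‖) (hL : 0 ≤ L)
    {u v : ℝ → X} (hu : Continuous u) (hv : Continuous v)
    (huv : ∀ s ∈ Icc 0 t, ‖u s - v s‖ ≤ K) (ht : 0 ≤ t) :
    ‖Upsilon S R f x₀ u t - Upsilon S R f x₀ v t‖ ≤ (∫ σ in 0..t, ψ σ) * (L * K) := by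
  have hint (w : ℝ → X) (hw : Continuous w) :
      IntervalIntegrable (fun s => R (t - s) (f s (w s))) volume 0 t :=
    intervalIntegrable_clm_apply_sub ht hR hRψ hψ (hf.comp (continuous_id.prodMk hw))
  rw [Upsilon, Upsilon, add_sub_add_left_eq_sub, ← integral_sub (hint u hu) (hint v hv)]
  simp_rw [← map_sub]
  exact norm_integral_clm_apply_sub_le ht hRψ hψ fun s hs =>
    (hfLip s hs.1 _ _).trans (mul_le_mul_of_nonneg_left (huv s hs) hL)

section FixedPoint

variable {E : Type*} [NormedAddCommGroup E]

noncomputable def BddCont.clampBCF {u : ℝ → E} (hu : BddCont u) : ℝ →ᵇ E :=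
  BoundedContinuousFunction.ofNormedAddCommGroup (fun t => u (max t 0))
    (hu.1.comp (continuous_id.max continuous_const)) hu.2.choose fun _ => hu.2.choose_spec _

theorem BddCont.clampBCF_apply {u : ℝ → E} (hu : BddCont u) (t : ℝ) :
    hu.clampBCF t = u (max t 0) :=
  rfl

theorem BoundedContinuousFunction.bddCont (u : ℝ →ᵇ E) : BddCont u :=
  ⟨u.continuous, ‖u‖, u.norm_coe_le_norm⟩

theorem exists_bddCont_fixedPoint_unique_of_contracting [CompleteSpace E]
    {Φ : (ℝ → E) → ℝ → E} {c : ℝ} (hc : c < 1) (hΦ : ∀ u, BddCont u → BddCont (Φ u))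
    (hcontr : ∀ u v : ℝ → E, BddCont u → BddCont v → ∀ K : ℝ,
      (∀ t ≥ (0:ℝ), ‖u t - v t‖ ≤ K) → ∀ t ≥ (0:ℝ), ‖Φ u t - Φ v t‖ ≤ c * K) :
    ∃ u : ℝ → E, BddCont u ∧ (∀ t ≥ (0:ℝ), u t = Φ u t) ∧
      ∀ v : ℝ → E, BddCont v → (∀ t ≥ (0:ℝ), v t = Φ v t) → ∀ t ≥ (0:ℝ), v t = u t := by
  set Ψ : (ℝ →ᵇ E) → ℝ →ᵇ E := fun u => (hΦ u u.bddCont).clampBCF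
  have hΨ : ContractingWith c.toNNReal Ψ := by
    refine ⟨Real.toNNReal_lt_one.2 hc, LipschitzWith.of_dist_le_mul fun u v => ?_⟩
    refine (BoundedContinuousFunction.dist_le (by positivity)).2 fun t => ?_
    rw [dist_eq_norm]
    refine (hcontr u v u.bddCont v.bddCont (dist u v) (fun s _ => ?_) _ (le_max_right t 0)).trans
      (mul_le_mul_of_nonneg_right (Real.le_coe_toNNReal c) dist_nonneg)
    rw [← dist_eq_norm]
    exact BoundedContinuousFunction.dist_coe_le_dist s
  -- With `K = 0`, the contraction estimate says that `Φ u` on `[0,∞)` only depends on `u` there.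
  have hlocal (u v : ℝ → E) (hu : BddCont u) (hv : BddCont v) (huv : ∀ t ≥ (0:ℝ), u t = v t)
      (t : ℝ) (ht : 0 ≤ t) : Φ u t = Φ v t := by
    have := hcontr u v hu hv 0 (fun s hs => by simp [huv s hs]) t ht
    rwa [mul_zero, norm_le_zero_iff, sub_eq_zero] at this
  have : Nonempty (ℝ →ᵇ E) := ⟨0⟩
  set φ := ContractingWith.fixedPoint Ψ hΨ
  have hφ : Ψ φ = φ := hΨ.fixedPoint_isFixedPt
  refine ⟨φ, φ.bddCont, fun t ht => ?_, fun v hv hvΦ t ht => ?_⟩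
  · conv_lhs => rw [← hφ]
    simp only [Ψ, BddCont.clampBCF_apply, max_eq_left ht]
  · have hclamp : ∀ s ≥ (0:ℝ), hv.clampBCF s = v s := fun s hs => by
      rw [BddCont.clampBCF_apply, max_eq_left hs]
    have hfix : Ψ hv.clampBCF = hv.clampBCF := by
      ext s
      simp only [Ψ, BddCont.clampBCF_apply]
      rw [hlocal _ v (BoundedContinuousFunction.bddCont _) hv hclamp _ (le_max_right s 0),
        ← hvΦ _ (le_max_right s 0)]
    rw [← hclamp t ht, hΨ.fixedPoint_unique' hfix hφ]

end FixedPoint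

theorem upsilon_contraction_fixed_point_general
    (γ β M₁ M₂ L : ℝ) (hγ : γ ∈ Set.Ioo (0:ℝ) 1) (hβ : β ∈ Set.Ioc (0:ℝ) 1)
    (hM₁ : 0 < M₁) (hM₂ : 0 < M₂) (hL : 0 ≤ L)
    (S R : ℝ → X →L[ℝ] X) (x₀ : X)
    (hRcont : ∀ x : X, ContinuousOn (fun t => R t x) (Set.Ioi 0))
    (hR1 : ∀ t ∈ Set.Ioc (0:ℝ) 1, ‖R t‖ ≤ M₁ * t ^ (γ * β - 1))
    (hR2 : ∀ t ≥ (1:ℝ), ‖R t‖ ≤ M₂ * t ^ (-γ - 1))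
    (f : ℝ → X → X) (hf : Continuous (Function.uncurry f))
    (hfLip : ∀ t ≥ (0:ℝ), ∀ x y : X, ‖f t x - f t y‖ ≤ L * ‖x - y‖)
    (hUps : ∀ u, BddCont u → BddCont (Upsilon S R f x₀ u))
    (hcontr : L * (M₁ / (γ * β) + M₂ / γ) < 1) :
    (∀ u v : ℝ → X, BddCont u → BddCont v → ∀ K : ℝ,
      (∀ t ≥ (0:ℝ), ‖u t - v t‖ ≤ K) →
      ∀ t ≥ (0:ℝ), ‖Upsilon S R f x₀ u t - Upsilon S R f x₀ v t‖ ≤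
        L * (M₁ / (γ * β) + M₂ / γ) * K) ∧
    (∃ u : ℝ → X, BddCont u ∧ (∀ t ≥ (0:ℝ), u t = Upsilon S R f x₀ u t) ∧
      ∀ v : ℝ → X, BddCont v → (∀ t ≥ (0:ℝ), v t = Upsilon S R f x₀ v t) →
        ∀ t ≥ (0:ℝ), v t = u t) := by
  have hγβ : 0 < γ * β := mul_pos hγ.1 hβ.1
  have hRψ : ∀ τ > 0, ‖R τ‖ ≤ kernelMajorant M₁ M₂ (γ * β) γ τ :=
    le_kernelMajorant hR1 hR2
  have hcontraction : ∀ u v : ℝ → X, BddCont u → BddCont v → ∀ K : ℝ,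
      (∀ t ≥ (0:ℝ), ‖u t - v t‖ ≤ K) → ∀ t ≥ (0:ℝ),
        ‖Upsilon S R f x₀ u t - Upsilon S R f x₀ v t‖ ≤ L * (M₁ / (γ * β) + M₂ / γ) * K := by
    intro u v hu hv K hK t ht
    have hLK : 0 ≤ L * K := mul_nonneg hL ((norm_nonneg _).trans (hK 0 le_rfl))
    calc ‖Upsilon S R f x₀ u t - Upsilon S R f x₀ v t‖
        ≤ (∫ σ in 0..t, kernelMajorant M₁ M₂ (γ * β) γ σ) * (L * K) :=
          norm_Upsilon_sub_le hRcont hRψ (intervalIntegrable_kernelMajorant hγβ hγ.1 ht) hf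
            hfLip hL hu.1 hv.1 (fun s hs => hK s hs.1) ht
      _ ≤ (M₁ / (γ * β) + M₂ / γ) * (L * K) := mul_le_mul_of_nonneg_right
          (integral_kernelMajorant_le hM₁.le hM₂.le hγβ hγ.1 ht) hLK
      _ = L * (M₁ / (γ * β) + M₂ / γ) * K := by ring
  exact ⟨hcontraction, exists_bddCont_fixedPoint_unique_of_contracting hcontr hUps hcontraction⟩

/-- If `‖R_γ(t)‖ ≤ M₁ t^{γβ-1}` on `(0,1]`, `‖R_γ(t)‖ ≤ M₂ t^{-γ-1}` for `t ≥ 1`, `f` is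
`L`-Lipschitz in the second variable and `L (M₁/(γβ) + M₂/γ) < 1`, then `Υ` is a strict
contraction on `C_b([0,∞):X)` and hence has a unique fixed point there. -/
theorem upsilon_contraction_fixed_point
    (γ β M₁ M₂ L : ℝ) (hγ : γ ∈ Set.Ioo (0:ℝ) 1) (hβ : β ∈ Set.Ioc (0:ℝ) 1)
    (hM₁ : 0 < M₁) (hM₂ : 0 < M₂) (hL : 0 ≤ L)
    (S R : ℝ → X →L[ℝ] X) (x₀ : X)
    (hScont : Continuous fun t => S t x₀)
    (hSbd : ∃ MS : ℝ, ∀ t : ℝ, ‖S t‖ ≤ MS)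
    (hRcont : ∀ x : X, ContinuousOn (fun t => R t x) (Set.Ioi 0))
    (hR1 : ∀ t ∈ Set.Ioc (0:ℝ) 1, ‖R t‖ ≤ M₁ * t ^ (γ * β - 1))
    (hR2 : ∀ t ≥ (1:ℝ), ‖R t‖ ≤ M₂ * t ^ (-γ - 1))
    (f : ℝ → X → X) (hf : Continuous (Function.uncurry f))
    (hfLip : ∀ t ≥ (0:ℝ), ∀ x y : X, ‖f t x - f t y‖ ≤ L * ‖x - y‖)
    (hUps : ∀ u, BddCont u → BddCont (Upsilon S R f x₀ u))
    (hcontr : L * (M₁ / (γ * β) + M₂ / γ) < 1) :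
    (∀ u v : ℝ → X, BddCont u → BddCont v → ∀ K : ℝ,
      (∀ t ≥ (0:ℝ), ‖u t - v t‖ ≤ K) →
      ∀ t ≥ (0:ℝ), ‖Upsilon S R f x₀ u t - Upsilon S R f x₀ v t‖ ≤
        L * (M₁ / (γ * β) + M₂ / γ) * K) ∧
    (∃ u : ℝ → X, BddCont u ∧ (∀ t ≥ (0:ℝ), u t = Upsilon S R f x₀ u t) ∧
      ∀ v : ℝ → X, BddCont v → (∀ t ≥ (0:ℝ), v t = Upsilon S R f x₀ v t) →
        ∀ t ≥ (0:ℝ), v t = u t) :=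
  upsilon_contraction_fixed_point_general γ β M₁ M₂ L hγ hβ hM₁ hM₂ hL S R x₀ hRcont hR1 hR2 f hf
    hfLip hUps hcontr
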